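/- arXiv:2510.01771 — 3 statements merged into one kernel-verified Lean document; each statement's English description precedes it below -/
import Mathlib

section
/- Let n_1,…,n_J be positive integers, N = n_1+⋯+n_J, and m a positive integer. Let C ∈ ℝ^{N×N} be symmetric positive definite, partitioned into blocks C_{ij} ∈ ℝ^{n_i×n_j}. Let C* ∈ ℝ^{m×m} be symmetric positive definite, let U_i ∈ ℝ^{n_i×m} for i=1,…,J, let U ∈ ℝ^{N×m} be the matrix stacking U_1,…,U_J vertically, and set C̃_{ij} := U_i (C*)^{-1} U_jᵀ. Assume C − U (C*)^{-1} Uᵀ is positive semidefinite and each R_i := C_{ii} − C̃_{ii} is positive definite. Define C_1 ∈ ℝ^{N×N} by (C_1)_{ii} = C_{ii} and (C_1)_{ij} = C̃_{ij} for i ≠ j, and define C_2 := blockdiag(C_{11},…,C_{JJ}). For a symmetric positive definite Σ ∈ ℝ^{N×N} define D(Σ) := (1/2)(tr(Σ^{-1} C) − N + log det Σ − log det C). Then (1/N)·D(C_1) ≤ (1/N)·D(C_2) + m/N. -/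
/-!
Write `L = U C*⁻¹ Uᵀ` and `R = blockdiag(R₁, …, R_J)`, so that `C₁ = R + L`. Since `C₂` is block
diagonal with the diagonal blocks of both `C` and `C₁`, `tr(C₂⁻¹ C) = tr(C₂⁻¹ C₁) = N`, and the
nonnegativity of the Gaussian KL divergence of `C₁` from `C₂` gives `log det C₁ ≤ log det C₂`.
For the trace, split `C = L + (C - L)`. As `C₁ - L = R ⪰ 0`, a Schur complement argument gives
`Uᵀ C₁⁻¹ U ⪯ C*`, hence `tr(C₁⁻¹ L) ≤ m`; as `C₁ ⪰ R`, `C₁⁻¹ ⪯ R⁻¹`, hence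
`tr(C₁⁻¹ (C - L)) ≤ tr(R⁻¹ (C - L)) = N`, again by the block structure. So `D(C₁) ≤ D(C₂) + m/2`.
-/

open Matrix
open scoped MatrixOrder ComplexOrder

namespace Matrix

section PosDef

variable {ι κ 𝕜 : Type*} [Fintype ι] [DecidableEq ι] [Fintype κ] [DecidableEq κ] [RCLike 𝕜]

lemma PosSemidef.trace_mul_nonneg {A B : Matrix ι ι 𝕜} (hA : A.PosSemidef)
    (hB : B.PosSemidef) : 0 ≤ (A * B).trace := by
  obtain ⟨X, rfl⟩ := CStarAlgebra.nonneg_iff_eq_star_mul_self.mp hA.nonneg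
  rw [star_eq_conjTranspose, Matrix.mul_assoc, trace_mul_comm]
  exact (hB.mul_mul_conjTranspose_same X).trace_nonneg

/-- `A - B` and `B⁻¹ - A⁻¹` are the two Schur complements of `!![A, 1; 1, B⁻¹]`. -/
lemma PosDef.posSemidef_inv_sub_inv {A B : Matrix ι ι 𝕜} (hA : A.PosDef) (hB : B.PosDef)
    (hAB : (A - B).PosSemidef) : (B⁻¹ - A⁻¹).PosSemidef := by
  let := hA.isUnit.invertible
  let := hB.isUnit.invertible
  have hblock := (PosDef.fromBlocks₂₂ A (1 : Matrix ι ι 𝕜) hB.inv).mpr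
    (by simpa [inv_inv_of_invertible] using hAB)
  simpa using (PosDef.fromBlocks₁₁ 1 B⁻¹ hA).mp hblock

lemma PosDef.log_det_le_trace_sub_card {A : Matrix ι ι ℝ} (hA : A.PosDef) :
    Real.log A.det ≤ A.trace - Fintype.card ι := by
  have hev := hA.eigenvalues_pos
  rw [hA.isHermitian.det_eq_prod_eigenvalues, hA.isHermitian.trace_eq_sum_eigenvalues]
  simp only [RCLike.ofReal_real_eq_id, id]
  rw [Real.log_prod fun i _ => (hev i).ne', Fintype.card_eq_sum_ones, Nat.cast_sum,
    Nat.cast_one, ← Finset.sum_sub_distrib]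
  exact Finset.sum_le_sum fun i _ => Real.log_le_sub_one_of_pos (hev i)

/-- Nonnegativity of the Kullback–Leibler divergence of `N(0, A)` from `N(0, B)`. -/
lemma PosDef.log_det_sub_log_det_le {A B : Matrix ι ι ℝ} (hA : A.PosDef) (hB : B.PosDef) :
    Real.log A.det - Real.log B.det ≤ (B⁻¹ * A).trace - Fintype.card ι := by
  obtain ⟨X, hX⟩ := CStarAlgebra.nonneg_iff_eq_star_mul_self.mp hB.inv.posSemidef.nonneg
  have hXunit : IsUnit X := (isUnit_iff_isUnit_det X).mpr <| isUnit_of_mul_isUnit_right <| by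
    rw [← det_mul, ← hX]; exact (isUnit_iff_isUnit_det _).mp hB.inv.isUnit
  have hdet : (X * A * star X).det = A.det * B⁻¹.det := by
    rw [hX, det_mul, det_mul, det_mul]; ring
  have htrace : (X * A * star X).trace = (B⁻¹ * A).trace := by
    rw [hX, Matrix.mul_assoc, trace_mul_comm, Matrix.mul_assoc, trace_mul_comm]
  have key := ((IsUnit.posDef_star_right_conjugate_iff hXunit).mpr hA).log_det_le_trace_sub_card
  rw [hdet, htrace, Real.log_mul hA.det_pos.ne' hB.inv.det_pos.ne', det_nonsing_inv,
    Ring.inverse_eq_inv, Real.log_inv] at key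
  linarith

/-- The Schur complements of `!![A, U; Uᵀ, S]` turn `U S⁻¹ Uᵀ ≤ A` into `Uᵀ A⁻¹ U ≤ S`. -/
lemma PosDef.trace_inv_mul_lowRank_le_card {A : Matrix ι ι ℝ} {S : Matrix κ κ ℝ}
    {U : Matrix ι κ ℝ} (hA : A.PosDef) (hS : S.PosDef) (hAU : (A - U * S⁻¹ * Uᵀ).PosSemidef) :
    (A⁻¹ * (U * S⁻¹ * Uᵀ)).trace ≤ Fintype.card κ := by
  let := hA.isUnit.invertible
  let := hS.isUnit.invertible
  have hblock := (PosDef.fromBlocks₂₂ A U hS).mpr (by simpa using hAU)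
  have hschur : (S - Uᵀ * A⁻¹ * U).PosSemidef := by
    simpa using (PosDef.fromBlocks₁₁ U S hA).mp hblock
  have hgap := hS.inv.posSemidef.trace_mul_nonneg hschur
  calc (A⁻¹ * (U * S⁻¹ * Uᵀ)).trace = (S⁻¹ * (Uᵀ * A⁻¹ * U)).trace := by
        rw [trace_mul_comm S⁻¹]
        simp only [Matrix.mul_assoc]
        rw [trace_mul_comm Uᵀ]
        simp only [Matrix.mul_assoc]
    _ = (S⁻¹ * S).trace - (S⁻¹ * (S - Uᵀ * A⁻¹ * U)).trace := by
        rw [Matrix.mul_sub, trace_sub]; ring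
    _ ≤ Fintype.card κ := by
        rw [inv_mul_of_invertible, trace_one]; linarith

lemma trace_inv_add_lowRank_mul_le {R C : Matrix ι ι ℝ} {S : Matrix κ κ ℝ} {U : Matrix ι κ ℝ}
    (hR : R.PosDef) (hS : S.PosDef) (hC : (C - U * S⁻¹ * Uᵀ).PosSemidef) :
    ((R + U * S⁻¹ * Uᵀ)⁻¹ * C).trace ≤ (R⁻¹ * (C - U * S⁻¹ * Uᵀ)).trace + Fintype.card κ := by
  set L := U * S⁻¹ * Uᵀ
  have hL : L.PosSemidef := by simpa using hS.inv.posSemidef.mul_mul_conjTranspose_same U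
  have hRL : (R + L).PosDef := hR.add_posSemidef hL
  have hlowRank := hRL.trace_inv_mul_lowRank_le_card (U := U) hS (by simpa [L] using hR.posSemidef)
  have hanti := (hRL.posSemidef_inv_sub_inv hR (by simpa using hL)).trace_mul_nonneg hC
  rw [Matrix.sub_mul, trace_sub] at hanti
  calc ((R + L)⁻¹ * C).trace = ((R + L)⁻¹ * L).trace + ((R + L)⁻¹ * (C - L)).trace := by
        rw [← trace_add, ← Matrix.mul_add, add_sub_cancel]
    _ ≤ _ := by linarith

end PosDef

section BlockDiagonal

variable {ι : Type*} [DecidableEq ι] {o : ι → Type*}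

lemma eq_blockDiagonal'_blockDiag' {α : Type*} [Zero α] {M : Matrix (Σ i, o i) (Σ i, o i) α}
    (hM : ∀ p q : Σ i, o i, p.1 ≠ q.1 → M p q = 0) : M = blockDiagonal' (blockDiag' M) := by
  ext ⟨i, k⟩ ⟨j, l⟩
  obtain rfl | hij := eq_or_ne i j
  · simp [blockDiag'_apply]
  · rw [hM ⟨i, k⟩ ⟨j, l⟩ hij, blockDiagonal'_apply_ne _ _ _ hij]

variable [Fintype ι] [∀ i, Fintype (o i)]

lemma trace_blockDiagonal'_mul {R : Type*} [NonUnitalNonAssocSemiring R]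
    (B : ∀ i, Matrix (o i) (o i) R) (X : Matrix (Σ i, o i) (Σ i, o i) R) :
    (blockDiagonal' B * X).trace = ∑ i, (B i * blockDiag' X i).trace := by
  simp only [trace, diag, mul_apply, Fintype.sum_sigma, blockDiagonal'_apply, blockDiag'_apply]
  refine Finset.sum_congr rfl fun i _ => Finset.sum_congr rfl fun k _ => ?_
  rw [Finset.sum_eq_single i
    (fun j _ hj => Finset.sum_eq_zero fun l _ => by simp [Ne.symm hj]) (by simp)]
  simp

variable [∀ i, DecidableEq (o i)]

lemma blockDiagonal'_mul_blockDiagonal'_inv {R : Type*} [CommRing R]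
    {B : ∀ i, Matrix (o i) (o i) R} (hB : ∀ i, IsUnit (B i).det) :
    blockDiagonal' B * blockDiagonal' (fun i => (B i)⁻¹) = 1 := by
  rw [← blockDiagonal'_mul]
  simp only [mul_nonsing_inv _ (hB _)]
  exact blockDiagonal'_one

lemma inv_blockDiagonal' {R : Type*} [CommRing R] {B : ∀ i, Matrix (o i) (o i) R}
    (hB : ∀ i, IsUnit (B i).det) :
    (blockDiagonal' B)⁻¹ = blockDiagonal' fun i => (B i)⁻¹ :=
  inv_eq_right_inv (blockDiagonal'_mul_blockDiagonal'_inv hB)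

lemma trace_inv_blockDiagonal'_blockDiag'_mul_self {R : Type*} [CommRing R]
    (X : Matrix (Σ i, o i) (Σ i, o i) R) (hX : ∀ i, IsUnit (blockDiag' X i).det) :
    ((blockDiagonal' (blockDiag' X))⁻¹ * X).trace = Fintype.card (Σ i, o i) := by
  simp [inv_blockDiagonal' hX, trace_blockDiagonal'_mul, nonsing_inv_mul _ (hX _),
    Fintype.card_sigma]

lemma PosDef.blockDiagonal' {𝕜 : Type*} [RCLike 𝕜] {B : ∀ i, Matrix (o i) (o i) 𝕜}
    (hB : ∀ i, (B i).PosDef) : (blockDiagonal' B).PosDef := by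
  choose X hX using fun i => CStarAlgebra.nonneg_iff_eq_star_mul_self.mp (hB i).posSemidef.nonneg
  have hfactor : Matrix.blockDiagonal' B =
      (Matrix.blockDiagonal' X)ᴴ * Matrix.blockDiagonal' X := by
    rw [blockDiagonal'_conjTranspose, ← blockDiagonal'_mul]
    exact congrArg _ (funext hX)
  have hpsd : (Matrix.blockDiagonal' B).PosSemidef :=
    hfactor ▸ posSemidef_conjTranspose_mul_self _
  rw [hpsd.posDef_iff_isUnit, isUnit_iff_isUnit_det]
  exact isUnit_det_of_right_inverse <|
    blockDiagonal'_mul_blockDiagonal'_inv fun i => (isUnit_iff_isUnit_det _).mp (hB i).isUnit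

end BlockDiagonal

variable {ι κ : Type*} [Fintype ι] [DecidableEq ι] [Fintype κ] [DecidableEq κ] {o : ι → Type*}
  [∀ i, Fintype (o i)] [∀ i, DecidableEq (o i)]

/-- Replacing the off-diagonal blocks of `C` by those of the low-rank matrix `U S⁻¹ Uᵀ` costs at
most `card κ` in `tr(Σ⁻¹ C) + log det Σ`, compared with discarding them. -/
theorem trace_inv_mul_add_log_det_lowRank_le {C : Matrix (Σ i, o i) (Σ i, o i) ℝ}
    {S : Matrix κ κ ℝ} {U : Matrix (Σ i, o i) κ ℝ} (hC : C.PosDef) (hS : S.PosDef)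
    (hCU : (C - U * S⁻¹ * Uᵀ).PosSemidef)
    (hblocks : ∀ i, (blockDiag' (C - U * S⁻¹ * Uᵀ) i).PosDef) :
    ((blockDiagonal' (blockDiag' (C - U * S⁻¹ * Uᵀ)) + U * S⁻¹ * Uᵀ)⁻¹ * C).trace
        + Real.log (blockDiagonal' (blockDiag' (C - U * S⁻¹ * Uᵀ)) + U * S⁻¹ * Uᵀ).det
      ≤ ((blockDiagonal' (blockDiag' C))⁻¹ * C).trace
        + Real.log (blockDiagonal' (blockDiag' C)).det + Fintype.card κ := by
  set L := U * S⁻¹ * Uᵀ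
  set R := blockDiagonal' (blockDiag' (C - L))
  have hL : L.PosSemidef := by simpa using hS.inv.posSemidef.mul_mul_conjTranspose_same U
  have hR : R.PosDef := PosDef.blockDiagonal' hblocks
  have hCblocks : ∀ i, (blockDiag' C i).PosDef := fun i => hC.submatrix sigma_mk_injective
  have hsame_blocks : blockDiag' (R + L) = blockDiag' C := by
    rw [blockDiag'_add, blockDiag'_blockDiagonal', ← blockDiag'_add, sub_add_cancel]
  have htrace_C₂ :
      ((blockDiagonal' (blockDiag' C))⁻¹ * (R + L)).trace = Fintype.card (Σ i, o i) := by
    rw [← hsame_blocks]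
    exact trace_inv_blockDiagonal'_blockDiag'_mul_self _
      (hsame_blocks ▸ fun i => (hCblocks i).det_pos.ne'.isUnit)
  have hlog_det := (hR.add_posSemidef hL).log_det_sub_log_det_le (PosDef.blockDiagonal' hCblocks)
  rw [htrace_C₂] at hlog_det
  have htrace : ((R + L)⁻¹ * C).trace ≤ (R⁻¹ * (C - L)).trace + Fintype.card κ :=
    trace_inv_add_lowRank_mul_le hR hS hCU
  rw [trace_inv_blockDiagonal'_blockDiag'_mul_self _ fun i => (hblocks i).det_pos.ne'.isUnit]
    at htrace
  rw [trace_inv_blockDiagonal'_blockDiag'_mul_self _ fun i => (hCblocks i).det_pos.ne'.isUnit]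
  linarith

end Matrix

theorem kl_lowrank_le_kl_independent_general
    {J m : ℕ} (n : Fin J → ℕ)
    (N : ℕ)
    (C : Matrix ((i : Fin J) × Fin (n i)) ((i : Fin J) × Fin (n i)) ℝ)
    (hC : C.PosDef)
    (Cstar : Matrix (Fin m) (Fin m) ℝ) (hCstar : Cstar.PosDef)
    (Ui : (i : Fin J) → Matrix (Fin (n i)) (Fin m) ℝ)
    (U : Matrix ((i : Fin J) × Fin (n i)) (Fin m) ℝ)
    (hU : ∀ (i : Fin J) (k : Fin (n i)) (j : Fin m), U ⟨i, k⟩ j = Ui i k j)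
    (hPSD : (C - U * Cstar⁻¹ * Uᵀ).PosSemidef)
    (hRi : ∀ i : Fin J,
      (Matrix.of fun k l : Fin (n i) =>
        C ⟨i, k⟩ ⟨i, l⟩ - (Ui i * Cstar⁻¹ * (Ui i)ᵀ) k l).PosDef)
    (C₁ C₂ : Matrix ((i : Fin J) × Fin (n i)) ((i : Fin J) × Fin (n i)) ℝ)
    (hC₁diag : ∀ (i : Fin J) (k l : Fin (n i)), C₁ ⟨i, k⟩ ⟨i, l⟩ = C ⟨i, k⟩ ⟨i, l⟩)
    (hC₁off : ∀ p q : (i : Fin J) × Fin (n i), p.1 ≠ q.1 → C₁ p q = (U * Cstar⁻¹ * Uᵀ) p q)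
    (hC₂diag : ∀ (i : Fin J) (k l : Fin (n i)), C₂ ⟨i, k⟩ ⟨i, l⟩ = C ⟨i, k⟩ ⟨i, l⟩)
    (hC₂off : ∀ p q : (i : Fin J) × Fin (n i), p.1 ≠ q.1 → C₂ p q = 0)
    (D : Matrix ((i : Fin J) × Fin (n i)) ((i : Fin J) × Fin (n i)) ℝ → ℝ)
    (hD : ∀ S : Matrix ((i : Fin J) × Fin (n i)) ((i : Fin J) × Fin (n i)) ℝ,
      D S = 1 / 2 * ((S⁻¹ * C).trace - (N : ℝ) + Real.log S.det - Real.log C.det)) :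
    1 / (N : ℝ) * D C₁ ≤ 1 / (N : ℝ) * D C₂ + (m : ℝ) / (N : ℝ) := by
  set L := U * Cstar⁻¹ * Uᵀ
  have hblocks : ∀ i, (blockDiag' (C - L) i).PosDef := fun i => by
    convert hRi i using 1
    ext k l
    simp [L, blockDiag'_apply, mul_apply, hU]
  have hC₁ : C₁ = blockDiagonal' (blockDiag' (C - L)) + L := by
    rw [← sub_eq_iff_eq_add, eq_blockDiagonal'_blockDiag' (M := C₁ - L) fun p q hpq => by
      simp [hC₁off p q hpq]]
    congr 1 with i k l
    simp [blockDiag'_apply, hC₁diag]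
  have hC₂ : C₂ = blockDiagonal' (blockDiag' C) := by
    rw [eq_blockDiagonal'_blockDiag' hC₂off]
    congr 1 with i k l
    exact hC₂diag i k l
  have key := trace_inv_mul_add_log_det_lowRank_le hC hCstar hPSD hblocks
  rw [← hC₁, ← hC₂, Fintype.card_fin] at key
  have hD_le : D C₁ ≤ D C₂ + m / 2 := by
    rw [hD, hD]
    linarith
  calc 1 / (N : ℝ) * D C₁ ≤ 1 / N * (D C₂ + m / 2) := by gcongr
    _ ≤ 1 / N * D C₂ + m / N := by
      rw [mul_add, one_div_mul_eq_div (N : ℝ) (m / 2)]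
      gcongr
      linarith [(m.cast_nonneg : (0 : ℝ) ≤ m)]

/-- Proposition 1 in explicit matrix form: the dimension-normalized Gaussian KL divergence
`D(Σ)/N`, with `D(Σ) = ½(tr(Σ⁻¹C) − N + log det Σ − log det C)`, satisfies
`D(C₁)/N ≤ D(C₂)/N + m/N`, where `C₁` is the covariance of the low-rank model with full local
covariance and `C₂ = blockdiag(C₁₁,…,C_JJ)` is that of the independence model. -/
theorem kl_lowrank_le_kl_independent
    {J m : ℕ} (hJ : 0 < J) (hm : 0 < m) (n : Fin J → ℕ) (hn : ∀ i, 0 < n i)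
    (N : ℕ) (hN : N = ∑ i, n i)
    (C : Matrix ((i : Fin J) × Fin (n i)) ((i : Fin J) × Fin (n i)) ℝ)
    (hC : C.PosDef)
    (Cstar : Matrix (Fin m) (Fin m) ℝ) (hCstar : Cstar.PosDef)
    (Ui : (i : Fin J) → Matrix (Fin (n i)) (Fin m) ℝ)
    (U : Matrix ((i : Fin J) × Fin (n i)) (Fin m) ℝ)
    (hU : ∀ (i : Fin J) (k : Fin (n i)) (j : Fin m), U ⟨i, k⟩ j = Ui i k j)
    (hPSD : (C - U * Cstar⁻¹ * Uᵀ).PosSemidef)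
    (hRi : ∀ i : Fin J,
      (Matrix.of fun k l : Fin (n i) =>
        C ⟨i, k⟩ ⟨i, l⟩ - (Ui i * Cstar⁻¹ * (Ui i)ᵀ) k l).PosDef)
    (C₁ C₂ : Matrix ((i : Fin J) × Fin (n i)) ((i : Fin J) × Fin (n i)) ℝ)
    (hC₁diag : ∀ (i : Fin J) (k l : Fin (n i)), C₁ ⟨i, k⟩ ⟨i, l⟩ = C ⟨i, k⟩ ⟨i, l⟩)
    (hC₁off : ∀ p q : (i : Fin J) × Fin (n i), p.1 ≠ q.1 → C₁ p q = (U * Cstar⁻¹ * Uᵀ) p q)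
    (hC₂diag : ∀ (i : Fin J) (k l : Fin (n i)), C₂ ⟨i, k⟩ ⟨i, l⟩ = C ⟨i, k⟩ ⟨i, l⟩)
    (hC₂off : ∀ p q : (i : Fin J) × Fin (n i), p.1 ≠ q.1 → C₂ p q = 0)
    (D : Matrix ((i : Fin J) × Fin (n i)) ((i : Fin J) × Fin (n i)) ℝ → ℝ)
    (hD : ∀ S : Matrix ((i : Fin J) × Fin (n i)) ((i : Fin J) × Fin (n i)) ℝ,
      D S = 1 / 2 * ((S⁻¹ * C).trace - (N : ℝ) + Real.log S.det - Real.log C.det)) :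
    1 / (N : ℝ) * D C₁ ≤ 1 / (N : ℝ) * D C₂ + (m : ℝ) / (N : ℝ) :=
  kl_lowrank_le_kl_independent_general n N C hC Cstar hCstar Ui U hU hPSD hRi C₁ C₂ hC₁diag hC₁off
    hC₂diag hC₂off D hD
end

section
/- Let C_0, C_1, C_2 > 0 and ᾱ > 0 be real constants, let τ ≥ 1 be an integer and τ̄ > 0 a real number. Define A_0 := min{ C_0 / (C_2 + √(C_1 C_0)), ᾱ } and A_1 := 1/(C_0 A_0), and assume C_0 · A_0 ≤ 1. Let β ∈ (0,1) and set α := β A_0 (τ̄+1)^{-1} (τ+1)^{-1}. Suppose (V_t)_{t∈ℕ} is a sequence of nonnegative real numbers such that for every t ∈ ℕ: V_{t+1} ≤ (1 − α C_0) V_t + α³ τ τ̄ C_1 · max{ V_s : s ∈ ℕ, t−3τ ≤ s ≤ t } + α² τ τ̄ C_2 · max{ V_s : s ∈ ℕ, t−2τ ≤ s ≤ t }. Then for all t ∈ ℕ: V_t ≤ ( 1 − ((1−β)β / (A_1 + 8β²)) · (τ̄+1)^{-1} (τ+1)^{-1} )^t · V_0. -/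
/-!
Write `ρ = 1 - c` for the claimed rate and prove `V t ≤ ρ ^ t * V 0` by strong induction. The
window maxima are then at most `ρ ^ (t - K) * V 0 ≤ ρ ^ t * V 0 / (1 - K c)` (Bernoulli), so the
induction closes once `(1 - α C₀) + α³ τ τ̄ C₁ / (1 - 3τc) + α² τ τ̄ C₂ / (1 - 2τc) ≤ 1 - c`.
With `D = ((τ̄ + 1)(τ + 1))⁻¹` and `α = β A₀ D`, the choice of `A₀` bounds the two delay terms by
`m (τ̄ + 1) D` and `m τ (τ̄ + 1) D`, where `m = β² C₀ A₀ D`; these add up to `m`, and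
`c ≤ (1 - β) β C₀ A₀ D` leaves exactly the margin `α C₀ - c ≥ m`.
-/

open Finset

lemma pow_tsub_le_div_pow {ρ : ℝ} (hρ0 : 0 < ρ) (hρ1 : ρ ≤ 1) (t K : ℕ) :
    ρ ^ (t - K) ≤ ρ ^ t / ρ ^ K := by
  rw [le_div_iff₀ (pow_pos hρ0 K), ← pow_add]
  exact pow_le_pow_of_le_one hρ0.le hρ1 le_tsub_add

lemma sup'_Icc_le_pow_mul {V : ℕ → ℝ} {ρ : ℝ} (hρ0 : 0 ≤ ρ) (hρ1 : ρ ≤ 1) (hV0 : 0 ≤ V 0)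
    {t : ℕ} (hV : ∀ s ≤ t, V s ≤ ρ ^ s * V 0) (K : ℕ) :
    (Icc (t - K) t).sup' (nonempty_Icc.mpr (Nat.sub_le t K)) V ≤ ρ ^ (t - K) * V 0 := by
  refine sup'_le _ _ fun s hs => ?_
  obtain ⟨hKs, hst⟩ := mem_Icc.mp hs
  exact (hV s hst).trans <| mul_le_mul_of_nonneg_right (pow_le_pow_of_le_one hρ0 hρ1 hKs) hV0

theorem le_pow_mul_of_delayed_recursion {V : ℕ → ℝ} (hV : ∀ t, 0 ≤ V t) {a b d ρ : ℝ}
    {K L : ℕ} (ha : 0 ≤ a) (hb : 0 ≤ b) (hd : 0 ≤ d) (hρ0 : 0 < ρ) (hρ1 : ρ ≤ 1)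
    (hrate : a + b / ρ ^ K + d / ρ ^ L ≤ ρ)
    (hrec : ∀ t, V (t + 1) ≤ a * V t
      + b * (Icc (t - K) t).sup' (nonempty_Icc.mpr (Nat.sub_le t K)) V
      + d * (Icc (t - L) t).sup' (nonempty_Icc.mpr (Nat.sub_le t L)) V) :
    ∀ t, V t ≤ ρ ^ t * V 0 := by
  intro t
  induction t using Nat.strong_induction_on with
  | _ t ih =>
  cases t with
  | zero => simp
  | succ t =>
    have hprev : ∀ s ≤ t, V s ≤ ρ ^ s * V 0 := fun s hs => ih s (Nat.lt_succ_of_le hs)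
    have hwindow (M : ℕ) :
        (Icc (t - M) t).sup' (nonempty_Icc.mpr (Nat.sub_le t M)) V ≤ ρ ^ t / ρ ^ M * V 0 :=
      (sup'_Icc_le_pow_mul hρ0.le hρ1 (hV 0) hprev M).trans <|
        mul_le_mul_of_nonneg_right (pow_tsub_le_div_pow hρ0 hρ1 t M) (hV 0)
    calc V (t + 1)
        ≤ a * (ρ ^ t * V 0) + b * (ρ ^ t / ρ ^ K * V 0) + d * (ρ ^ t / ρ ^ L * V 0) := by
          grw [hrec t, hprev t le_rfl, hwindow K, hwindow L]
      _ = (a + b / ρ ^ K + d / ρ ^ L) * (ρ ^ t * V 0) := by ring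
      _ ≤ ρ * (ρ ^ t * V 0) := by gcongr; exact mul_nonneg (pow_nonneg hρ0.le t) (hV 0)
      _ = ρ ^ (t + 1) * V 0 := by ring

theorem le_one_sub_pow_mul_of_delayed_recursion {V : ℕ → ℝ} (hV : ∀ t, 0 ≤ V t)
    {a b d c : ℝ} {K L : ℕ} (ha : 0 ≤ a) (hb : 0 ≤ b) (hd : 0 ≤ d) (hc0 : 0 ≤ c) (hc1 : c < 1)
    (hKc : K * c < 1) (hLc : L * c < 1)
    (hrate : a + b / (1 - K * c) + d / (1 - L * c) ≤ 1 - c)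
    (hrec : ∀ t, V (t + 1) ≤ a * V t
      + b * (Icc (t - K) t).sup' (nonempty_Icc.mpr (Nat.sub_le t K)) V
      + d * (Icc (t - L) t).sup' (nonempty_Icc.mpr (Nat.sub_le t L)) V) :
    ∀ t, V t ≤ (1 - c) ^ t * V 0 := by
  have hdelay {e : ℝ} (he : 0 ≤ e) {n : ℕ} (hn : n * c < 1) :
      e / (1 - c) ^ n ≤ e / (1 - n * c) := by
    refine div_le_div_of_nonneg_left he (by linarith) ?_
    simpa [sub_eq_add_neg] using one_add_mul_le_pow (a := -c) (by linarith) n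
  refine le_pow_mul_of_delayed_recursion hV ha hb hd (by linarith) (by linarith) ?_ hrec
  linarith [hdelay hb hKc, hdelay hd hLc]

lemma mul_le_and_sq_mul_le_of_mul_add_sqrt_le {A C₀ C₁ C₂ : ℝ} (hA : 0 ≤ A) (hC₀ : 0 < C₀)
    (hC₁ : 0 ≤ C₁) (hC₂ : 0 ≤ C₂) (h : A * (C₂ + √(C₁ * C₀)) ≤ C₀) :
    A * C₂ ≤ C₀ ∧ A ^ 2 * C₁ ≤ C₀ := by
  have hsqrt : A * √(C₁ * C₀) ≤ C₀ := by nlinarith [Real.sqrt_nonneg (C₁ * C₀)]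
  refine ⟨by nlinarith [Real.sqrt_nonneg (C₁ * C₀)], ?_⟩
  have : (A ^ 2 * C₁) * C₀ ≤ C₀ * C₀ := calc
    (A ^ 2 * C₁) * C₀ = (A * √(C₁ * C₀)) ^ 2 := by
      rw [mul_pow, Real.sq_sqrt (by positivity)]; ring
    _ ≤ C₀ * C₀ := by rw [sq]; gcongr
  exact le_of_mul_le_mul_right this hC₀

lemma rate_factor_bounds {β x : ℝ} (hβ0 : 0 ≤ β) (hβ1 : β ≤ 1) (hx0 : 0 < x) (hx1 : x ≤ 1) :
    (1 - β) * β / (1 / x + 8 * β ^ 2) ≤ (1 - β) * β * x ∧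
      (1 - β) * β / (1 / x + 8 * β ^ 2) ≤ 1 / 4 := by
  have hnum : 0 ≤ (1 - β) * β := mul_nonneg (by linarith) hβ0
  have hinv : 1 ≤ 1 / x := by rw [le_div_iff₀ hx0]; linarith
  have hden : 1 / x ≤ 1 / x + 8 * β ^ 2 := by nlinarith
  constructor
  · calc (1 - β) * β / (1 / x + 8 * β ^ 2) ≤ (1 - β) * β / (1 / x) := by gcongr
      _ = (1 - β) * β * x := by field_simp
  · rw [div_le_iff₀ (by linarith)]
    nlinarith [sq_nonneg (1 - 2 * β)]

lemma delay_terms_le_margin {τ τbar β A C₀ C₁ C₂ D c α : ℝ} (hτ : 0 ≤ τ) (hτbar : 0 ≤ τbar)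
    (hβ0 : 0 ≤ β) (hβ1 : β ≤ 1) (hA : 0 ≤ A) (hC₀ : 0 ≤ C₀)
    (hAC₁ : A ^ 2 * C₁ ≤ C₀) (hAC₂ : A * C₂ ≤ C₀)
    (hD : (τbar + 1) * (τ + 1) * D = 1) (hα : α = β * A * D)
    (hc : c ≤ D / 4) (hcm : c ≤ (1 - β) * β * (C₀ * A) * D) :
    α ^ 3 * τ * τbar * C₁ / (1 - 3 * τ * c) + α ^ 2 * τ * τbar * C₂ / (1 - 2 * τ * c) ≤
      α * C₀ - c := by
  have hD0 : 0 < D := pos_of_mul_pos_right (hD ▸ one_pos) (by positivity)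
  have hτD : τ * D * (τbar + 1) ≤ 1 := by nlinarith
  have hτc : 4 * (τ * c) * (τbar + 1) ≤ 1 := by
    nlinarith [mul_le_mul_of_nonneg_left hc (by positivity : (0:ℝ) ≤ τ * (τbar + 1))]
  have hτc' : τ * c ≤ 1 / 4 := by nlinarith
  set m := β ^ 2 * (C₀ * A) * D
  have hm : 0 ≤ m := by positivity
  have hlong : α ^ 3 * τ * τbar * C₁ / (1 - 3 * τ * c) ≤ m * ((τbar + 1) * D) := by
    have hττbarD : 4 * (τ * τbar * D) ≤ τbar + 1 := by
      refine le_of_mul_le_mul_right ?_ (by linarith : 0 < τbar + 1)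
      nlinarith [mul_le_mul_of_nonneg_left hτD hτbar, sq_nonneg (τbar - 1)]
    have key : β * (τ * τbar * D) ≤ (τbar + 1) * (1 - 3 * τ * c) := calc
      β * (τ * τbar * D) ≤ τ * τbar * D := mul_le_of_le_one_left (by positivity) hβ1
      _ ≤ (τbar + 1) * (1 - 3 * τ * c) := by nlinarith
    rw [div_le_iff₀ (by linarith)]
    calc α ^ 3 * τ * τbar * C₁ = β ^ 3 * D ^ 3 * τ * τbar * A * (A ^ 2 * C₁) := by rw [hα]; ring
      _ ≤ β ^ 3 * D ^ 3 * τ * τbar * A * C₀ := by gcongr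
      _ = m * D * (β * (τ * τbar * D)) := by ring
      _ ≤ m * D * ((τbar + 1) * (1 - 3 * τ * c)) := by gcongr
      _ = m * ((τbar + 1) * D) * (1 - 3 * τ * c) := by ring
  have hshort : α ^ 2 * τ * τbar * C₂ / (1 - 2 * τ * c) ≤ m * (τ * (τbar + 1) * D) := by
    rw [div_le_iff₀ (by linarith)]
    calc α ^ 2 * τ * τbar * C₂ = β ^ 2 * D ^ 2 * τ * τbar * A * (A * C₂) := by rw [hα]; ring
      _ ≤ β ^ 2 * D ^ 2 * τ * τbar * A * C₀ := by gcongr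
      _ = m * (τ * D) * τbar := by ring
      _ ≤ m * (τ * D) * ((τbar + 1) * (1 - 2 * τ * c)) := by gcongr; linarith
      _ = m * (τ * (τbar + 1) * D) * (1 - 2 * τ * c) := by ring
  have hsplit : m * ((τbar + 1) * D) + m * (τ * (τbar + 1) * D) = m := by linear_combination m * hD
  have hmargin : m ≤ α * C₀ - c := by rw [hα]; linarith
  linarith

theorem lyapunov_contraction_general
    (C₀ C₁ C₂ αbar : ℝ) (hC₀ : 0 < C₀) (hC₁ : 0 < C₁) (hC₂ : 0 < C₂) (hαbar : 0 < αbar)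
    (τ : ℕ) (τbar : ℝ) (hτbar : 0 < τbar)
    (A₀ A₁ : ℝ)
    (hA₀ : A₀ = min (C₀ / (C₂ + Real.sqrt (C₁ * C₀))) αbar)
    (hA₁ : A₁ = 1 / (C₀ * A₀))
    (hsmall : C₀ * A₀ ≤ 1)
    (β : ℝ) (hβ0 : 0 < β) (hβ1 : β < 1)
    (α : ℝ) (hα : α = β * A₀ * (τbar + 1)⁻¹ * ((τ : ℝ) + 1)⁻¹)
    (V : ℕ → ℝ) (hVnonneg : ∀ t, 0 ≤ V t)
    (hrec : ∀ t : ℕ,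
      V (t + 1) ≤ (1 - α * C₀) * V t
        + α ^ 3 * (τ : ℝ) * τbar * C₁ *
            ((Finset.Icc (t - 3 * τ) t).sup' (Finset.nonempty_Icc.mpr (Nat.sub_le t (3 * τ))) V)
        + α ^ 2 * (τ : ℝ) * τbar * C₂ *
            ((Finset.Icc (t - 2 * τ) t).sup' (Finset.nonempty_Icc.mpr (Nat.sub_le t (2 * τ))) V)) :
    ∀ t : ℕ,
      V t ≤ (1 - (1 - β) * β / (A₁ + 8 * β ^ 2) * (τbar + 1)⁻¹ * ((τ : ℝ) + 1)⁻¹) ^ t * V 0 := by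
  have hA₀pos : 0 < A₀ := by rw [hA₀]; exact lt_min (by positivity) hαbar
  obtain ⟨hA₀C₂, hA₀C₁⟩ := mul_le_and_sq_mul_le_of_mul_add_sqrt_le hA₀pos.le hC₀ hC₁.le hC₂.le
    ((le_div_iff₀ (by positivity)).mp (hA₀ ▸ min_le_left _ _))
  obtain ⟨hrx, hr4⟩ := rate_factor_bounds hβ0.le hβ1.le (mul_pos hC₀ hA₀pos) hsmall
  set D := (τbar + 1)⁻¹ * ((τ : ℝ) + 1)⁻¹ with hDdef
  have hD : (τbar + 1) * ((τ : ℝ) + 1) * D = 1 := by rw [hDdef]; field_simp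
  have hD0 : 0 < D := by positivity
  have hD1 : D ≤ 1 := mul_le_one₀ (inv_le_one_of_one_le₀ (by linarith)) (by positivity)
    (inv_le_one_of_one_le₀ (by linarith))
  have hτD : (τ : ℝ) * D ≤ 1 := by nlinarith
  have hαD : α = β * A₀ * D := by rw [hα]; ring
  have hα0 : 0 < α := by rw [hαD]; positivity
  subst hA₁
  set c := (1 - β) * β / (1 / (C₀ * A₀) + 8 * β ^ 2) * (τbar + 1)⁻¹ * ((τ : ℝ) + 1)⁻¹
  have hcD : c = (1 - β) * β / (1 / (C₀ * A₀) + 8 * β ^ 2) * D := by ring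
  have hc0 : 0 ≤ c := by rw [hcD]; positivity
  have hc4 : c ≤ D / 4 := by rw [hcD]; nlinarith
  have hcm : c ≤ (1 - β) * β * (C₀ * A₀) * D := by rw [hcD]; gcongr
  have hτc : (τ : ℝ) * c ≤ 1 / 4 := by nlinarith
  have hαC₀ : α * C₀ ≤ 1 := calc
    α * C₀ = β * (C₀ * A₀) * D := by rw [hαD]; ring
    _ ≤ 1 := mul_le_one₀ (mul_le_one₀ hβ1.le (by positivity) hsmall) hD0.le hD1
  have hmargin := delay_terms_le_margin (by positivity) hτbar.le hβ0.le hβ1.le hA₀pos.le hC₀.le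
    hA₀C₁ hA₀C₂ hD hαD hc4 hcm
  refine le_one_sub_pow_mul_of_delayed_recursion hVnonneg (by linarith) (by positivity)
    (by positivity) hc0 (by linarith) ?_ ?_ ?_ hrec <;> push_cast <;> linarith

/-- Lemma 3 (Lyapunov contraction): if the nonnegative sequence `V` satisfies the recursive
Lyapunov inequality with constants `C₀, C₁, C₂ > 0`, staleness bounds `τ ≥ 1`, `τ̄ > 0`, and the
step size is `α = β A₀ (τ̄+1)⁻¹(τ+1)⁻¹` with `A₀ = min{C₀/(C₂+√(C₁C₀)), ᾱ}`, `A₁ = 1/(C₀A₀)`,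
then `V` converges linearly with the stated rate. -/
theorem lyapunov_contraction
    (C₀ C₁ C₂ αbar : ℝ) (hC₀ : 0 < C₀) (hC₁ : 0 < C₁) (hC₂ : 0 < C₂) (hαbar : 0 < αbar)
    (τ : ℕ) (hτ : 1 ≤ τ) (τbar : ℝ) (hτbar : 0 < τbar)
    (A₀ A₁ : ℝ)
    (hA₀ : A₀ = min (C₀ / (C₂ + Real.sqrt (C₁ * C₀))) αbar)
    (hA₁ : A₁ = 1 / (C₀ * A₀))
    (hsmall : C₀ * A₀ ≤ 1)
    (β : ℝ) (hβ0 : 0 < β) (hβ1 : β < 1)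
    (α : ℝ) (hα : α = β * A₀ * (τbar + 1)⁻¹ * ((τ : ℝ) + 1)⁻¹)
    (V : ℕ → ℝ) (hVnonneg : ∀ t, 0 ≤ V t)
    (hrec : ∀ t : ℕ,
      V (t + 1) ≤ (1 - α * C₀) * V t
        + α ^ 3 * (τ : ℝ) * τbar * C₁ *
            ((Finset.Icc (t - 3 * τ) t).sup' (Finset.nonempty_Icc.mpr (Nat.sub_le t (3 * τ))) V)
        + α ^ 2 * (τ : ℝ) * τbar * C₂ *
            ((Finset.Icc (t - 2 * τ) t).sup' (Finset.nonempty_Icc.mpr (Nat.sub_le t (2 * τ))) V)) :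
    ∀ t : ℕ,
      V t ≤ (1 - (1 - β) * β / (A₁ + 8 * β ^ 2) * (τbar + 1)⁻¹ * ((τ : ℝ) + 1)⁻¹) ^ t * V 0 :=
  lyapunov_contraction_general C₀ C₁ C₂ αbar hC₀ hC₁ hC₂ hαbar τ τbar hτbar A₀ A₁ hA₀ hA₁ hsmall β
    hβ0 hβ1 α hα V hVnonneg hrec
end

section
/- Let E_1 and E_2 be real inner product spaces and J a positive integer. For j = 1,…,J let f_j : E_1 × E_2 → ℝ be differentiable with L_j-Lipschitz gradient (L_j > 0), and let h : E_1 × E_2 → ℝ be differentiable with L_h-Lipschitz gradient (L_h > 0), where E_1 × E_2 carries the product inner product. Assume f := (1/J)Σ_{j=1}^J f_j + h is μ-strongly convex for some μ > 0, i.e., f(z') ≥ f(z) + ⟨∇f(z), z'−z⟩ + (μ/2)‖z'−z‖² for all z, z' ∈ E_1 × E_2. Set L̄ := (1/J)Σ_{j=1}^J L_j. Given points x_2^0, x_2^1, …, x_2^J ∈ E_2 and y_2^0, y_2^1, …, y_2^J ∈ E_2, suppose x_1* ∈ E_1 is a global minimizer of the map x_1 ↦ (1/J)Σ_{j=1}^J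 f_j(x_1, x_2^j) + h(x_1, x_2^0) and y_1* ∈ E_1 is a global minimizer of the map y_1 ↦ (1/J)Σ_{j=1}^J f_j(y_1, y_2^j) + h(y_1, y_2^0). Then ‖x_1* − y_1*‖ ≤ (1/μ)·(1/J)·Σ_{j=1}^J L_j·( ‖x_2^j − x_2^0‖ + ‖y_2^j − y_2^0‖ ) + (1/μ)·(L_h + L̄)·‖x_2^0 − y_2^0‖. -/
/-! Strong convexity makes `∇F` strongly monotone, so along the first block
`μ ‖x₁* - y₁*‖ ≤ ‖∂₁F(x₁*, x₂⁰) - ∂₁F(y₁*, x₂⁰)‖`. First-order optimality of `x₁*` turns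
`∂₁F(x₁*, x₂⁰)` into `(1/J) ∑ⱼ (∂₁fⱼ(x₁*, x₂⁰) - ∂₁fⱼ(x₁*, x₂ʲ))`, which the Lipschitz bounds
control by the staleness `‖x₂ʲ - x₂⁰‖`; the same holds for `y₁*` at `y₂⁰`, and moving the second
argument of `∂₁F` from `x₂⁰` to `y₂⁰` costs at most `(L_h + L̄) ‖x₂⁰ - y₂⁰‖`. -/

open RealInnerProductSpace WithLp

section StrongConvexity

variable {G : Type*} [NormedAddCommGroup G] [InnerProductSpace ℝ G]

lemma mul_sq_norm_sub_le_inner_of_strong_convexity {F : G → ℝ} {g : G → G} {μ : ℝ}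
    (hF : ∀ z z', F z' ≥ F z + ⟪g z, z' - z⟫ + μ / 2 * ‖z' - z‖ ^ 2) (z z' : G) :
    μ * ‖z - z'‖ ^ 2 ≤ ⟪g z - g z', z - z'⟫ := by
  have h₁ := hF z z'
  have h₂ := hF z' z
  have h_neg : ⟪g z, z' - z⟫ = -⟪g z, z - z'⟫ := by rw [← inner_neg_right, neg_sub]
  rw [norm_sub_rev] at h₁
  rw [inner_sub_left]
  linarith

lemma mul_norm_le_norm_of_mul_sq_norm_le_inner {a d : G} {μ : ℝ} (h : μ * ‖d‖ ^ 2 ≤ ⟪a, d⟫) :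
    μ * ‖d‖ ≤ ‖a‖ := by
  rcases (norm_nonneg d).eq_or_lt with hd | hd
  · rw [← hd, mul_zero]
    exact norm_nonneg a
  · have h' : μ * ‖d‖ * ‖d‖ ≤ ‖a‖ * ‖d‖ := by
      rw [mul_assoc, ← sq]
      exact h.trans (real_inner_le_norm a d)
    exact le_of_mul_le_mul_right h' hd

end StrongConvexity

lemma norm_smul_sum_add_sub_le {ι X V : Type*} [SeminormedAddCommGroup X]
    [SeminormedAddCommGroup V] [NormedSpace ℝ V] (s : Finset ι) {c : ℝ} (hc : 0 ≤ c)
    {g : ι → X → V} {k : X → V} {L : ι → ℝ} {K : ℝ}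
    (hg : ∀ i z z', ‖g i z - g i z'‖ ≤ L i * ‖z - z'‖) (hk : ∀ z z', ‖k z - k z'‖ ≤ K * ‖z - z'‖)
    (z z' : X) :
    ‖(c • ∑ i ∈ s, g i z + k z) - (c • ∑ i ∈ s, g i z' + k z')‖
      ≤ (c * ∑ i ∈ s, L i + K) * ‖z - z'‖ := by
  have h_sum : ‖∑ i ∈ s, (g i z - g i z')‖ ≤ ∑ i ∈ s, L i * ‖z - z'‖ :=
    (norm_sum_le _ _).trans (Finset.sum_le_sum fun i _ => hg i z z')
  calc ‖(c • ∑ i ∈ s, g i z + k z) - (c • ∑ i ∈ s, g i z' + k z')‖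
      = ‖c • ∑ i ∈ s, (g i z - g i z') + (k z - k z')‖ := by
        rw [Finset.sum_sub_distrib, smul_sub, add_sub_add_comm]
    _ ≤ c * ∑ i ∈ s, L i * ‖z - z'‖ + K * ‖z - z'‖ := by
        grw [norm_add_le, norm_smul, Real.norm_of_nonneg hc, h_sum, hk]
    _ = (c * ∑ i ∈ s, L i + K) * ‖z - z'‖ := by rw [← Finset.sum_mul]; ring

section Gradient

variable {G : Type*} [NormedAddCommGroup G] [InnerProductSpace ℝ G] [CompleteSpace G]

lemma IsLocalMin.gradient_eq_zero {f : G → ℝ} {a : G} (h : IsLocalMin f a) :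
    gradient f a = 0 := by
  simp [gradient, h.fderiv_eq_zero]

lemma gradient_const_mul_sum_add {ι : Type*} (s : Finset ι) (c : ℝ) {f : ι → G → ℝ}
    {h : G → ℝ} {x : G} (hf : ∀ i ∈ s, DifferentiableAt ℝ (f i) x)
    (hh : DifferentiableAt ℝ h x) :
    gradient (fun z => c * ∑ i ∈ s, f i z + h z) x
      = c • ∑ i ∈ s, gradient (f i) x + gradient h x := by
  refine HasGradientAt.gradient ?_
  rw [hasGradientAt_iff_hasFDerivAt]
  refine (((HasFDerivAt.fun_sum fun i hi => (hf i hi).hasFDerivAt).const_mul c).fun_add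
    hh.hasFDerivAt).congr_fderiv ?_
  ext v
  simp

end Gradient

section Blocks

open scoped ENNReal

variable {p : ℝ≥0∞} {E₁ E₂ : Type*} [NormedAddCommGroup E₁] [NormedAddCommGroup E₂]

lemma toLp_mk_sub_toLp_mk_right (x y : E₁) (c : E₂) :
    toLp p (x, c) - toLp p (y, c) = toLp p (x - y, 0) := by
  rw [← toLp_sub, Prod.mk_sub_mk, sub_self]

variable [Fact (1 ≤ p)]

lemma norm_toLp_mk_sub_toLp_mk_left (x : E₁) (c c' : E₂) :
    ‖toLp p (x, c) - toLp p (x, c')‖ = ‖c - c'‖ := by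
  rw [← toLp_sub, Prod.mk_sub_mk, sub_self, norm_toLp_snd]

lemma norm_fst_sub_fst_le_of_lipschitz {g : WithLp p (E₁ × E₂) → WithLp p (E₁ × E₂)} {K : ℝ}
    (hg : ∀ z z', ‖g z - g z'‖ ≤ K * ‖z - z'‖) (x : E₁) (c c' : E₂) :
    ‖(g (toLp p (x, c))).fst - (g (toLp p (x, c'))).fst‖ ≤ K * ‖c - c'‖ := by
  calc ‖(g (toLp p (x, c))).fst - (g (toLp p (x, c'))).fst‖
      = ‖(g (toLp p (x, c)) - g (toLp p (x, c'))).fst‖ := by rw [sub_fst]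
    _ ≤ ‖g (toLp p (x, c)) - g (toLp p (x, c'))‖ := WithLp.norm_fst_le _ _
    _ ≤ K * ‖c - c'‖ := by rw [← norm_toLp_mk_sub_toLp_mk_left (p := p) x c c']; exact hg _ _

lemma norm_fst_smul_sum_add_le_of_stationary [NormedSpace ℝ E₁] [NormedSpace ℝ E₂]
    {ι : Type*} (s : Finset ι) {c : ℝ} (hc : 0 ≤ c)
    {g : ι → WithLp p (E₁ × E₂) → WithLp p (E₁ × E₂)} {L : ι → ℝ}
    (hg : ∀ i z z', ‖g i z - g i z'‖ ≤ L i * ‖z - z'‖) {k : WithLp p (E₁ × E₂)}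
    {x : E₁} {x₂ : ι → E₂} {x₂0 : E₂}
    (hstat : c • ∑ i ∈ s, (g i (toLp p (x, x₂ i))).fst + k.fst = 0) :
    ‖(c • ∑ i ∈ s, g i (toLp p (x, x₂0)) + k).fst‖ ≤ c * ∑ i ∈ s, L i * ‖x₂ i - x₂0‖ := by
  have fst_sum (v : ι → WithLp p (E₁ × E₂)) : (∑ i ∈ s, v i).fst = ∑ i ∈ s, (v i).fst :=
    map_sum (fstₗ p ℝ E₁ E₂) v s
  have h_eq : (c • ∑ i ∈ s, g i (toLp p (x, x₂0)) + k).fst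
      = c • ∑ i ∈ s, ((g i (toLp p (x, x₂0))).fst - (g i (toLp p (x, x₂ i))).fst) := by
    rw [← sub_zero (c • ∑ i ∈ s, g i (toLp p (x, x₂0)) + k).fst, ← hstat]
    simp [fst_sum, Finset.sum_sub_distrib, smul_sub]
  rw [h_eq, norm_smul, Real.norm_of_nonneg hc]
  gcongr
  refine (norm_sum_le _ _).trans (Finset.sum_le_sum fun i _ => ?_)
  rw [norm_sub_rev (x₂ i)]
  exact norm_fst_sub_fst_le_of_lipschitz (hg i) x x₂0 (x₂ i)

variable [InnerProductSpace ℝ E₁] [InnerProductSpace ℝ E₂]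

lemma mul_norm_sub_le_norm_fst_sub_of_strong_convexity {F : WithLp 2 (E₁ × E₂) → ℝ}
    {g : WithLp 2 (E₁ × E₂) → WithLp 2 (E₁ × E₂)} {μ : ℝ}
    (hF : ∀ z z', F z' ≥ F z + ⟪g z, z' - z⟫ + μ / 2 * ‖z' - z‖ ^ 2) (x y : E₁) (c : E₂) :
    μ * ‖x - y‖ ≤ ‖(g (toLp 2 (x, c))).fst - (g (toLp 2 (y, c))).fst‖ := by
  refine mul_norm_le_norm_of_mul_sq_norm_le_inner ?_
  have h := mul_sq_norm_sub_le_inner_of_strong_convexity hF (toLp 2 (x, c)) (toLp 2 (y, c))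
  simpa [toLp_mk_sub_toLp_mk_right] using h

variable [CompleteSpace E₁] [CompleteSpace E₂]

lemma hasGradientAt_comp_toLp_mk_left {g : WithLp 2 (E₁ × E₂) → ℝ} {x : E₁} {c : E₂}
    (hg : DifferentiableAt ℝ g (toLp 2 (x, c))) :
    HasGradientAt (fun u => g (toLp 2 (u, c))) (gradient g (toLp 2 (x, c))).fst x := by
  rw [hasGradientAt_iff_hasFDerivAt]
  refine (hg.hasFDerivAt.comp x ((prodContinuousLinearEquiv 2 ℝ E₁ E₂).symm.hasFDerivAt.comp x
    (hasFDerivAt_prodMk_left x c))).congr_fderiv ?_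
  ext v
  simp [← inner_gradient_left]

lemma smul_sum_fst_gradient_add_eq_zero_of_isMin {ι : Type*} [Fintype ι] {c : ℝ}
    {f : ι → WithLp 2 (E₁ × E₂) → ℝ} {h : WithLp 2 (E₁ × E₂) → ℝ} {x₂ : ι → E₂} {x₂0 : E₂}
    {x : E₁} (hf : ∀ i, DifferentiableAt ℝ (f i) (toLp 2 (x, x₂ i)))
    (hh : DifferentiableAt ℝ h (toLp 2 (x, x₂0)))
    (hmin : ∀ u, c * ∑ i, f i (toLp 2 (x, x₂ i)) + h (toLp 2 (x, x₂0))
      ≤ c * ∑ i, f i (toLp 2 (u, x₂ i)) + h (toLp 2 (u, x₂0))) :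
    c • ∑ i, (gradient (f i) (toLp 2 (x, x₂ i))).fst
      + (gradient h (toLp 2 (x, x₂0))).fst = 0 := by
  have hloc : IsLocalMin (fun u => c * ∑ i, f i (toLp 2 (u, x₂ i)) + h (toLp 2 (u, x₂0))) x :=
    Filter.Eventually.of_forall hmin
  rw [← hloc.gradient_eq_zero, gradient_const_mul_sum_add _ _
    (fun i _ => (hasGradientAt_comp_toLp_mk_left (hf i)).differentiableAt)
    (hasGradientAt_comp_toLp_mk_left hh).differentiableAt,
    (hasGradientAt_comp_toLp_mk_left hh).gradient]
  simp only [fun i => (hasGradientAt_comp_toLp_mk_left (hf i)).gradient]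

end Blocks

theorem block_minimizer_sensitivity_general
    {E₁ E₂ : Type*} [NormedAddCommGroup E₁] [InnerProductSpace ℝ E₁] [CompleteSpace E₁]
    [NormedAddCommGroup E₂] [InnerProductSpace ℝ E₂] [CompleteSpace E₂]
    (J : ℕ)
    (f : Fin J → WithLp 2 (E₁ × E₂) → ℝ) (L : Fin J → ℝ)
    (hfdiff : ∀ j, Differentiable ℝ (f j))
    (hflip : ∀ (j : Fin J) (z z' : WithLp 2 (E₁ × E₂)),
      ‖gradient (f j) z - gradient (f j) z'‖ ≤ L j * ‖z - z'‖)
    (h : WithLp 2 (E₁ × E₂) → ℝ) (Lh : ℝ)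
    (hhdiff : Differentiable ℝ h)
    (hhlip : ∀ z z' : WithLp 2 (E₁ × E₂),
      ‖gradient h z - gradient h z'‖ ≤ Lh * ‖z - z'‖)
    (F : WithLp 2 (E₁ × E₂) → ℝ)
    (hF : F = fun z => (1 / (J : ℝ)) * ∑ j, f j z + h z)
    (μ : ℝ) (hμ : 0 < μ)
    (hstrong : ∀ z z' : WithLp 2 (E₁ × E₂),
      F z' ≥ F z + ⟪gradient F z, z' - z⟫ + μ / 2 * ‖z' - z‖ ^ 2)
    (Lbar : ℝ) (hLbar : Lbar = (1 / (J : ℝ)) * ∑ j, L j)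
    (x₂ : Fin J → E₂) (x₂0 : E₂) (y₂ : Fin J → E₂) (y₂0 : E₂)
    (xstar ystar : E₁)
    (hx : ∀ x₁ : E₁,
      (1 / (J : ℝ)) * ∑ j, f j ((WithLp.equiv 2 (E₁ × E₂)).symm (xstar, x₂ j))
          + h ((WithLp.equiv 2 (E₁ × E₂)).symm (xstar, x₂0))
        ≤ (1 / (J : ℝ)) * ∑ j, f j ((WithLp.equiv 2 (E₁ × E₂)).symm (x₁, x₂ j))
          + h ((WithLp.equiv 2 (E₁ × E₂)).symm (x₁, x₂0)))
    (hy : ∀ y₁ : E₁,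
      (1 / (J : ℝ)) * ∑ j, f j ((WithLp.equiv 2 (E₁ × E₂)).symm (ystar, y₂ j))
          + h ((WithLp.equiv 2 (E₁ × E₂)).symm (ystar, y₂0))
        ≤ (1 / (J : ℝ)) * ∑ j, f j ((WithLp.equiv 2 (E₁ × E₂)).symm (y₁, y₂ j))
          + h ((WithLp.equiv 2 (E₁ × E₂)).symm (y₁, y₂0))) :
    ‖xstar - ystar‖ ≤
      1 / μ * ((1 / (J : ℝ)) * ∑ j, L j * (‖x₂ j - x₂0‖ + ‖y₂ j - y₂0‖))
        + 1 / μ * (Lh + Lbar) * ‖x₂0 - y₂0‖ := by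
  simp only [WithLp.equiv_symm_apply] at hx hy
  set c : ℝ := 1 / (J : ℝ)
  have hc : 0 ≤ c := by positivity
  have hgradF (z) : gradient F z = c • ∑ j, gradient (f j) z + gradient h z := by
    rw [hF]; exact gradient_const_mul_sum_add _ _ (fun j _ => hfdiff j z) (hhdiff z)
  have hFlip (z z') : ‖gradient F z - gradient F z'‖ ≤ (Lh + Lbar) * ‖z - z'‖ := by
    rw [hgradF, hgradF, hLbar, add_comm Lh]
    exact norm_smul_sum_add_sub_le _ hc hflip hhlip z z'
  have hxF : ‖(gradient F (toLp 2 (xstar, x₂0))).fst‖ ≤ c * ∑ j, L j * ‖x₂ j - x₂0‖ := by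
    rw [hgradF]
    exact norm_fst_smul_sum_add_le_of_stationary _ hc hflip
      (smul_sum_fst_gradient_add_eq_zero_of_isMin (fun j => hfdiff j _) (hhdiff _) hx)
  have hyF : ‖(gradient F (toLp 2 (ystar, y₂0))).fst‖ ≤ c * ∑ j, L j * ‖y₂ j - y₂0‖ := by
    rw [hgradF]
    exact norm_fst_smul_sum_add_le_of_stationary _ hc hflip
      (smul_sum_fst_gradient_add_eq_zero_of_isMin (fun j => hfdiff j _) (hhdiff _) hy)
  have hshift := norm_fst_sub_fst_le_of_lipschitz hFlip ystar x₂0 y₂0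
  set gx := (gradient F (toLp 2 (xstar, x₂0))).fst
  set gy := (gradient F (toLp 2 (ystar, x₂0))).fst
  set gy' := (gradient F (toLp 2 (ystar, y₂0))).fst
  have key : μ * ‖xstar - ystar‖
      ≤ c * ∑ j, L j * (‖x₂ j - x₂0‖ + ‖y₂ j - y₂0‖) + (Lh + Lbar) * ‖x₂0 - y₂0‖ := by
    calc μ * ‖xstar - ystar‖ ≤ ‖gx - gy‖ :=
          mul_norm_sub_le_norm_fst_sub_of_strong_convexity hstrong xstar ystar x₂0
      _ ≤ ‖gx‖ + (‖gy'‖ + ‖gy - gy'‖) := by grw [norm_sub_le, norm_le_norm_add_norm_sub' gy gy']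
      _ ≤ c * ∑ j, L j * ‖x₂ j - x₂0‖
          + (c * ∑ j, L j * ‖y₂ j - y₂0‖ + (Lh + Lbar) * ‖x₂0 - y₂0‖) := by gcongr
      _ = _ := by simp only [mul_add, Finset.sum_add_distrib]; ring
  calc ‖xstar - ystar‖ = (μ * ‖xstar - ystar‖) / μ := by field_simp
    _ ≤ (c * ∑ j, L j * (‖x₂ j - x₂0‖ + ‖y₂ j - y₂0‖) + (Lh + Lbar) * ‖x₂0 - y₂0‖) / μ := by
        gcongr
    _ = _ := by ring

/-- Lemma A.10 (block minimizer sensitivity). On the L²-product `E₁ × E₂`, let each `f j` be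
differentiable with `L j`-Lipschitz gradient, `h` differentiable with `L_h`-Lipschitz gradient,
and assume `f := (1/J)∑ⱼ fⱼ + h` is `μ`-strongly convex. If `x₁*` minimizes
`x₁ ↦ (1/J)∑ⱼ fⱼ(x₁, x₂ʲ) + h(x₁, x₂⁰)` and `y₁*` minimizes the analogous map with the `y`
points, then `‖x₁* − y₁*‖` is bounded by the staleness of the second-block arguments. -/
theorem block_minimizer_sensitivity
    {E₁ E₂ : Type*} [NormedAddCommGroup E₁] [InnerProductSpace ℝ E₁] [CompleteSpace E₁]
    [NormedAddCommGroup E₂] [InnerProductSpace ℝ E₂] [CompleteSpace E₂]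
    (J : ℕ) (hJ : 0 < J)
    (f : Fin J → WithLp 2 (E₁ × E₂) → ℝ) (L : Fin J → ℝ) (hL : ∀ j, 0 < L j)
    (hfdiff : ∀ j, Differentiable ℝ (f j))
    (hflip : ∀ (j : Fin J) (z z' : WithLp 2 (E₁ × E₂)),
      ‖gradient (f j) z - gradient (f j) z'‖ ≤ L j * ‖z - z'‖)
    (h : WithLp 2 (E₁ × E₂) → ℝ) (Lh : ℝ) (hLh : 0 < Lh)
    (hhdiff : Differentiable ℝ h)
    (hhlip : ∀ z z' : WithLp 2 (E₁ × E₂),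
      ‖gradient h z - gradient h z'‖ ≤ Lh * ‖z - z'‖)
    (F : WithLp 2 (E₁ × E₂) → ℝ)
    (hF : F = fun z => (1 / (J : ℝ)) * ∑ j, f j z + h z)
    (μ : ℝ) (hμ : 0 < μ)
    (hstrong : ∀ z z' : WithLp 2 (E₁ × E₂),
      F z' ≥ F z + ⟪gradient F z, z' - z⟫ + μ / 2 * ‖z' - z‖ ^ 2)
    (Lbar : ℝ) (hLbar : Lbar = (1 / (J : ℝ)) * ∑ j, L j)
    (x₂ : Fin J → E₂) (x₂0 : E₂) (y₂ : Fin J → E₂) (y₂0 : E₂)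
    (xstar ystar : E₁)
    (hx : ∀ x₁ : E₁,
      (1 / (J : ℝ)) * ∑ j, f j ((WithLp.equiv 2 (E₁ × E₂)).symm (xstar, x₂ j))
          + h ((WithLp.equiv 2 (E₁ × E₂)).symm (xstar, x₂0))
        ≤ (1 / (J : ℝ)) * ∑ j, f j ((WithLp.equiv 2 (E₁ × E₂)).symm (x₁, x₂ j))
          + h ((WithLp.equiv 2 (E₁ × E₂)).symm (x₁, x₂0)))
    (hy : ∀ y₁ : E₁,
      (1 / (J : ℝ)) * ∑ j, f j ((WithLp.equiv 2 (E₁ × E₂)).symm (ystar, y₂ j))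
          + h ((WithLp.equiv 2 (E₁ × E₂)).symm (ystar, y₂0))
        ≤ (1 / (J : ℝ)) * ∑ j, f j ((WithLp.equiv 2 (E₁ × E₂)).symm (y₁, y₂ j))
          + h ((WithLp.equiv 2 (E₁ × E₂)).symm (y₁, y₂0))) :
    ‖xstar - ystar‖ ≤
      1 / μ * ((1 / (J : ℝ)) * ∑ j, L j * (‖x₂ j - x₂0‖ + ‖y₂ j - y₂0‖))
        + 1 / μ * (Lh + Lbar) * ‖x₂0 - y₂0‖ :=
  block_minimizer_sensitivity_general J f L hfdiff hflip h Lh hhdiff hhlip F hF μ hμ hstrong Lbar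
    hLbar x₂ x₂0 y₂ y₂0 xstar ystar hx hy
end
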